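/- arXiv:math/0103131 — 2 statements merged into one kernel-verified Lean document; each statement's English description precedes it below -/
import Mathlib

section
/- Let m ≥ 1, α > m − 1 and β > −1, let P be the monic polynomial of degree n with ∫_0^1 P(x) x^{β}(1−x)^{α} x^k dx = 0 for k = 0, …, n−1, and let Q be the monic polynomial of degree n with ∫_0^1 Q(x) x^{β+m}(1−x)^{α−m} x^k dx = 0 for k = 0, …, n−1. Then for all x ∈ (0,1): d^m/dx^m [ (1−x)^α P(x) ] = (−1)^m (α + n − m + 1)_m (1−x)^{α−m} Q(x), where (a)_m = a(a+1)⋯(a+m−1) is the Pochhammer symbol. -/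
open MeasureTheory Polynomial Set

/-!
Since `d/dx [(1 - x)^c R(x)] = (1 - x)^(c-1) ((1 - x) R'(x) - c R(x))`, the `m`-th derivative of
`(1 - x)^α P(x)` is `(1 - x)^(α-m) Rₘ(x)` for a polynomial `Rₘ` of degree at most `n` whose
coefficient of `x^n` is `(-1)^m (α + n - m + 1)ₘ`. Integrating by parts against `x^(β+j+k+1)`,
each differentiation step carries orthogonality for the weight `x^(β+j) (1 - x)^(α-j)` to
orthogonality for `x^(β+j+1) (1 - x)^(α-j-1)`. So `Rₘ - (-1)^m (α + n - m + 1)ₘ Q` has degree `< n`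
and is orthogonal for the weight `x^(β+m) (1 - x)^(α-m)`, hence orthogonal to itself, hence zero.
-/

noncomputable def weightDeriv (c : ℝ) (R : ℝ[X]) : ℝ[X] :=
  (1 - X) * derivative R - C c * R

noncomputable def weightDerivIter (α : ℝ) (P : ℝ[X]) : ℕ → ℝ[X]
  | 0 => P
  | j + 1 => weightDeriv (α - j) (weightDerivIter α P j)

def JacobiOrthogonal (a b : ℝ) (n : ℕ) (R : ℝ[X]) : Prop :=
  ∀ k < n, ∫ x in Ioo (0:ℝ) 1, R.eval x * (x ^ b * (1 - x) ^ a) * x ^ k = 0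

@[simp]
lemma eval_weightDeriv (c : ℝ) (R : ℝ[X]) (x : ℝ) :
    (weightDeriv c R).eval x = (1 - x) * R.derivative.eval x - c * R.eval x := by
  simp [weightDeriv]

lemma hasDerivAt_one_sub_rpow_mul_eval (c : ℝ) (R : ℝ[X]) {x : ℝ} (hx : x < 1) :
    HasDerivAt (fun y => (1 - y) ^ c * R.eval y)
      ((1 - x) ^ (c - 1) * (weightDeriv c R).eval x) x := by
  have hpos : 0 < 1 - x := sub_pos.2 hx
  have hpow : HasDerivAt (fun y : ℝ => (1 - y) ^ c) (c * (1 - x) ^ (c - 1) * -1) x :=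
    (Real.hasDerivAt_rpow_const (Or.inl hpos.ne')).comp x ((hasDerivAt_id x).const_sub 1)
  refine (hpow.mul (R.hasDerivAt x)).congr_deriv ?_
  rw [eval_weightDeriv, Real.rpow_sub_one hpos.ne']
  field_simp
  ring

lemma iteratedDeriv_one_sub_rpow_mul_eval (α : ℝ) (P : ℝ[X]) (j : ℕ) {x : ℝ} (hx : x < 1) :
    iteratedDeriv j (fun y => (1 - y) ^ α * P.eval y) x
      = (1 - x) ^ (α - j) * (weightDerivIter α P j).eval x := by
  induction j generalizing x with
  | zero => simp [weightDerivIter]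
  | succ j ih =>
    have hloc : iteratedDeriv j (fun y => (1 - y) ^ α * P.eval y)
        =ᶠ[nhds x] fun y => (1 - y) ^ (α - j) * (weightDerivIter α P j).eval y :=
      Filter.eventually_of_mem (Iio_mem_nhds hx) fun y hy => ih hy
    rw [iteratedDeriv_succ, hloc.deriv_eq,
      (hasDerivAt_one_sub_rpow_mul_eval _ _ hx).deriv, Nat.cast_succ, sub_add_eq_sub_sub]
    rfl

lemma degree_sub_lt_of_coeff_eq {K : Type*} [Ring K] {p q : K[X]} {n : ℕ} (hp : p.natDegree ≤ n)
    (hq : q.natDegree ≤ n) (h : p.coeff n = q.coeff n) : (p - q).degree < n := by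
  refine (degree_lt_iff_coeff_zero _ _).2 fun k hk => ?_
  rcases hk.eq_or_lt with rfl | hk
  · rw [coeff_sub, h, sub_self]
  · rw [coeff_sub, coeff_eq_zero_of_natDegree_lt (hp.trans_lt hk),
      coeff_eq_zero_of_natDegree_lt (hq.trans_lt hk), sub_self]

lemma natDegree_weightDeriv_le {n : ℕ} {R : ℝ[X]} (hR : R.natDegree ≤ n) (c : ℝ) :
    (weightDeriv c R).natDegree ≤ n := by
  have hX : (1 - X : ℝ[X]).natDegree ≤ 1 := (natDegree_sub_le _ _).trans (by simp)
  refine (natDegree_sub_le _ _).trans (max_le ?_ ((natDegree_C_mul_le _ _).trans hR))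
  rcases Nat.eq_zero_or_pos R.natDegree with h0 | hpos
  · simp [derivative_of_natDegree_zero h0]
  · exact (natDegree_mul_le_of_le hX (natDegree_derivative_le R)).trans (by omega)

lemma coeff_weightDeriv_of_natDegree_le {n : ℕ} {R : ℝ[X]} (hR : R.natDegree ≤ n) (c : ℝ) :
    (weightDeriv c R).coeff n = -(c + n) * R.coeff n := by
  have hd : (derivative R).coeff n = 0 := by
    rw [coeff_derivative, coeff_eq_zero_of_natDegree_lt (by omega), zero_mul]
  have hXd : (X * derivative R).coeff n = n * R.coeff n := by
    cases n with
    | zero => simp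
    | succ k => rw [coeff_X_mul, coeff_derivative]; push_cast; ring
  simp only [weightDeriv, sub_mul, one_mul, coeff_sub, coeff_C_mul, hd, hXd]
  ring

lemma natDegree_weightDerivIter_le (α : ℝ) {P : ℝ[X]} {n : ℕ} (hP : P.natDegree ≤ n) (j : ℕ) :
    (weightDerivIter α P j).natDegree ≤ n := by
  induction j with
  | zero => exact hP
  | succ j ih => exact natDegree_weightDeriv_le ih _

lemma coeff_weightDerivIter (α : ℝ) {P : ℝ[X]} {n : ℕ} (hP : P.natDegree ≤ n) (j : ℕ) :
    (weightDerivIter α P j).coeff n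
      = (-1) ^ j * (∏ i ∈ Finset.range j, (α + n - j + 1 + i)) * P.coeff n := by
  induction j with
  | zero => simp [weightDerivIter]
  | succ j ih =>
    rw [weightDerivIter, coeff_weightDeriv_of_natDegree_le (natDegree_weightDerivIter_le α hP j),
      ih, Finset.prod_range_succ']
    push_cast
    ring_nf

lemma integrableOn_rpow_mul_one_sub_rpow {a b : ℝ} (ha : -1 < a) (hb : -1 < b) :
    IntegrableOn (fun x : ℝ => x ^ b * (1 - x) ^ a) (Icc 0 1) := by
  have hleft : IntegrableOn (fun x : ℝ => x ^ b) (Icc 0 (1 / 2)) := by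
    rw [integrableOn_Icc_iff_integrableOn_Ioc,
      ← intervalIntegrable_iff_integrableOn_Ioc_of_le (by norm_num)]
    exact intervalIntegral.intervalIntegrable_rpow' hb
  have hright : IntegrableOn (fun x : ℝ => (1 - x) ^ a) (Icc (1 / 2) 1) := by
    rw [integrableOn_Icc_iff_integrableOn_Ioc,
      ← intervalIntegrable_iff_integrableOn_Ioc_of_le (by norm_num)]
    have := (intervalIntegral.intervalIntegrable_rpow' (a := 0) (b := 1 / 2) ha).comp_sub_left 1
    rw [sub_zero, (by norm_num : (1:ℝ) - 1 / 2 = 1 / 2)] at this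
    exact this.symm
  have hcont_left : ContinuousOn (fun x : ℝ => (1 - x) ^ a) (Icc 0 (1 / 2)) :=
    fun x hx => ((continuous_const.sub continuous_id).continuousAt.rpow_const
      (Or.inl (by linarith [hx.2] : (0:ℝ) < 1 - x).ne')).continuousWithinAt
  have hcont_right : ContinuousOn (fun x : ℝ => x ^ b) (Icc (1 / 2) 1) :=
    fun x hx => (continuousAt_id.rpow_const
      (Or.inl (by linarith [hx.1] : (0:ℝ) < x).ne')).continuousWithinAt
  have := (hleft.mul_continuousOn hcont_left isCompact_Icc).union
    (hright.continuousOn_mul hcont_right isCompact_Icc)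
  rwa [Icc_union_Icc_eq_Icc (by norm_num) (by norm_num)] at this

lemma integrableOn_eval_mul_weight {a b : ℝ} (ha : -1 < a) (hb : -1 < b) (R : ℝ[X]) :
    IntegrableOn (fun x => R.eval x * (x ^ b * (1 - x) ^ a)) (Ioo 0 1) :=
  ((integrableOn_rpow_mul_one_sub_rpow ha hb).continuousOn_mul R.continuousOn
    isCompact_Icc).mono_set Ioo_subset_Icc_self

lemma integrableOn_eval_mul_weight_mul {a b : ℝ} (ha : -1 < a) (hb : -1 < b) (R : ℝ[X])
    {g : ℝ → ℝ} (hg : Continuous g) :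
    IntegrableOn (fun x => R.eval x * (x ^ b * (1 - x) ^ a) * g x) (Ioo 0 1) :=
  (integrableOn_eval_mul_weight ha hb R).mul_continuousOn_of_subset hg.continuousOn
    measurableSet_Ioo isCompact_Icc Ioo_subset_Icc_self

/-- Integration by parts; the boundary terms vanish because `0 < a` and `0 < s`. -/
lemma integral_weightDeriv_mul_weight {a s : ℝ} (ha : 0 < a) (hs : 0 < s) (R : ℝ[X]) :
    ∫ x in Ioo (0:ℝ) 1, (weightDeriv a R).eval x * (x ^ s * (1 - x) ^ (a - 1))
      = -(s * ∫ x in Ioo (0:ℝ) 1, R.eval x * (x ^ (s - 1) * (1 - x) ^ a)) := by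
  set F : ℝ → ℝ := fun x => (1 - x) ^ a * R.eval x * x ^ s
  have hF : ContinuousOn F (Icc 0 1) :=
    (((continuous_const.sub continuous_id).rpow_const fun _ => Or.inr ha.le).mul
      R.continuous |>.mul (continuous_id.rpow_const fun _ => Or.inr hs.le)).continuousOn
  have hderiv : ∀ x ∈ Ioo (0:ℝ) 1, HasDerivAt F
      ((weightDeriv a R).eval x * (x ^ s * (1 - x) ^ (a - 1))
        + s * (R.eval x * (x ^ (s - 1) * (1 - x) ^ a))) x := fun x hx =>
    ((hasDerivAt_one_sub_rpow_mul_eval a R hx.2).mul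
      (Real.hasDerivAt_rpow_const (Or.inl hx.1.ne'))).congr_deriv (by ring)
  have hI₁ := integrableOn_eval_mul_weight (by linarith) (by linarith) (weightDeriv a R)
    (a := a - 1) (b := s)
  have hI₂ := integrableOn_eval_mul_weight (by linarith) (by linarith) R (a := a) (b := s - 1)
  have hftc := intervalIntegral.integral_eq_sub_of_hasDerivAt_of_le zero_le_one hF hderiv
    ((intervalIntegrable_iff_integrableOn_Ioo_of_le zero_le_one).2 (hI₁.add (hI₂.const_mul s)))
  rw [intervalIntegral.integral_of_le zero_le_one, integral_Ioc_eq_integral_Ioo,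
    integral_add hI₁ (hI₂.const_mul s), integral_const_mul] at hftc
  simp only [F, sub_self, Real.zero_rpow ha.ne', Real.zero_rpow hs.ne', zero_mul, mul_zero,
    sub_zero] at hftc
  linarith

lemma eq_zero_of_integral_eval_mul_weight_mul_self {a b : ℝ} {R : ℝ[X]} (ha : -1 < a)
    (hb : -1 < b) (h : ∫ x in Ioo (0:ℝ) 1, R.eval x * (x ^ b * (1 - x) ^ a) * R.eval x = 0) :
    R = 0 := by
  have hw : ∀ x ∈ Ioo (0:ℝ) 1, 0 < x ^ b * (1 - x) ^ a := fun x hx =>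
    mul_pos (Real.rpow_pos_of_pos hx.1 b) (Real.rpow_pos_of_pos (sub_pos.2 hx.2) a)
  have hnonneg : 0 ≤ᵐ[volume.restrict (Ioo (0:ℝ) 1)]
      fun x => R.eval x * (x ^ b * (1 - x) ^ a) * R.eval x :=
    ae_restrict_of_forall_mem measurableSet_Ioo fun x hx => by
      dsimp only [Pi.zero_apply]
      nlinarith [mul_self_nonneg (R.eval x), hw x hx]
  have hae := (setIntegral_eq_zero_iff_of_nonneg_ae hnonneg
    (integrableOn_eval_mul_weight_mul ha hb R R.continuous)).1 h
  have hcont : ContinuousOn (fun x => R.eval x * (x ^ b * (1 - x) ^ a) * R.eval x)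
      (Ioo 0 1) := fun _ hx =>
    ((R.continuousAt.mul ((continuousAt_id.rpow_const (Or.inl hx.1.ne')).mul
      ((continuousAt_const.sub continuousAt_id).rpow_const (Or.inl (sub_pos.2 hx.2).ne')))).mul
        R.continuousAt).continuousWithinAt
  have hzero := Measure.eqOn_open_of_ae_eq hae isOpen_Ioo hcont continuousOn_const
  refine eq_zero_of_infinite_isRoot R ((Ioo_infinite zero_lt_one).mono fun x hx => ?_)
  simpa [(hw x hx).ne'] using hzero hx

namespace JacobiOrthogonal

variable {a b : ℝ} {n : ℕ} {R S : ℝ[X]}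

lemma weightDeriv (hR : JacobiOrthogonal a b n R) (ha : 0 < a) (hb : -1 < b) :
    JacobiOrthogonal (a - 1) (b + 1) n (_root_.weightDeriv a R) := by
  intro k hk
  have hs : 0 < b + k + 1 := by linarith [(Nat.cast_nonneg k : (0:ℝ) ≤ k)]
  calc ∫ x in Ioo (0:ℝ) 1, (_root_.weightDeriv a R).eval x * (x ^ (b + 1) * (1 - x) ^ (a - 1))
        * x ^ k
      = ∫ x in Ioo (0:ℝ) 1,
          (_root_.weightDeriv a R).eval x * (x ^ (b + k + 1) * (1 - x) ^ (a - 1)) := by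
        refine setIntegral_congr_fun measurableSet_Ioo fun x hx => ?_
        rw [add_right_comm, Real.rpow_add_natCast hx.1.ne']
        ring
    _ = -((b + k + 1) * ∫ x in Ioo (0:ℝ) 1, R.eval x * (x ^ b * (1 - x) ^ a) * x ^ k) := by
        rw [integral_weightDeriv_mul_weight ha hs, add_sub_cancel_right]
        congr 2
        refine setIntegral_congr_fun measurableSet_Ioo fun x hx => ?_
        rw [Real.rpow_add_natCast hx.1.ne']
        ring
    _ = 0 := by rw [hR k hk, mul_zero, neg_zero]

lemma weightDerivIter {α β : ℝ} {P : ℝ[X]} (hP : JacobiOrthogonal α β n P) (hβ : -1 < β) :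
    ∀ {m : ℕ}, (m : ℝ) - 1 < α → JacobiOrthogonal (α - m) (β + m) n (_root_.weightDerivIter α P m)
  | 0, _ => by simpa [_root_.weightDerivIter] using hP
  | m + 1, hα => by
    push_cast at hα
    have hm : (m : ℝ) - 1 < α := by linarith
    have h := (weightDerivIter hP hβ hm).weightDeriv (by linarith)
      (by linarith [(Nat.cast_nonneg m : (0:ℝ) ≤ m)])
    rwa [Nat.cast_succ, ← sub_sub, ← add_assoc]

lemma sub (hR : JacobiOrthogonal a b n R) (hS : JacobiOrthogonal a b n S)
    (ha : -1 < a) (hb : -1 < b) : JacobiOrthogonal a b n (R - S) := by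
  intro k hk
  simp only [eval_sub, sub_mul]
  rw [integral_sub (integrableOn_eval_mul_weight_mul ha hb R (by fun_prop))
    (integrableOn_eval_mul_weight_mul ha hb S (by fun_prop)), hR k hk, hS k hk, sub_zero]

lemma C_mul (hR : JacobiOrthogonal a b n R) (c : ℝ) : JacobiOrthogonal a b n (C c * R) := by
  intro k hk
  simp_rw [eval_mul, eval_C, mul_assoc c]
  rw [integral_const_mul, hR k hk, mul_zero]

lemma integral_mul_eval_eq_zero (hR : JacobiOrthogonal a b n R) (ha : -1 < a) (hb : -1 < b)
    (hS : S.natDegree < n) :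
    ∫ x in Ioo (0:ℝ) 1, R.eval x * (x ^ b * (1 - x) ^ a) * S.eval x = 0 := by
  simp only [eval_eq_sum_range' hS, Finset.mul_sum]
  rw [integral_finsetSum _ fun k _ =>
    integrableOn_eval_mul_weight_mul ha hb R (by fun_prop : Continuous (S.coeff k * · ^ k))]
  refine Finset.sum_eq_zero fun k hk => ?_
  simp only [mul_left_comm _ (S.coeff k)]
  rw [integral_const_mul, hR k (Finset.mem_range.1 hk), mul_zero]

lemma eq_zero_of_degree_lt (hR : JacobiOrthogonal a b n R) (ha : -1 < a) (hb : -1 < b)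
    (hdeg : R.degree < n) : R = 0 := by
  by_contra h0
  exact h0 (eq_zero_of_integral_eval_mul_weight_mul_self ha hb
    (hR.integral_mul_eval_eq_zero ha hb ((natDegree_lt_iff_degree_lt h0).2 hdeg)))

end JacobiOrthogonal

theorem stmt_4_general (m : ℕ) (α β : ℝ) (hα : (m : ℝ) - 1 < α) (hβ : -1 < β)
    (n : ℕ) (P Q : Polynomial ℝ)
    (hPm : P.Monic) (hPdeg : P.natDegree = n)
    (hPorth : ∀ k < n,
      ∫ x in Set.Ioo (0:ℝ) 1, P.eval x * (x ^ β * (1 - x) ^ α) * x ^ k = 0)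
    (hQm : Q.Monic) (hQdeg : Q.natDegree = n)
    (hQorth : ∀ k < n,
      ∫ x in Set.Ioo (0:ℝ) 1,
        Q.eval x * (x ^ (β + m) * (1 - x) ^ (α - m)) * x ^ k = 0) :
    ∀ x ∈ Set.Ioo (0:ℝ) 1,
      iteratedDeriv m (fun y => (1 - y) ^ α * P.eval y) x
        = (-1) ^ m * (∏ i ∈ Finset.range m, (α + n - m + 1 + i))
            * (1 - x) ^ (α - m) * Q.eval x := by
  set c : ℝ := (-1) ^ m * ∏ i ∈ Finset.range m, (α + n - m + 1 + i)
  have hPn : P.coeff n = 1 := hPdeg ▸ hPm.coeff_natDegree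
  have hQn : Q.coeff n = 1 := hQdeg ▸ hQm.coeff_natDegree
  have hα' : -1 < α - m := by linarith
  have hβ' : -1 < β + m := by linarith [(Nat.cast_nonneg m : (0:ℝ) ≤ m)]
  have hR : weightDerivIter α P m = C c * Q := by
    rw [← sub_eq_zero]
    refine ((JacobiOrthogonal.weightDerivIter hPorth hβ hα).sub (JacobiOrthogonal.C_mul hQorth c)
      hα' hβ').eq_zero_of_degree_lt hα' hβ' (degree_sub_lt_of_coeff_eq
        (natDegree_weightDerivIter_le α hPdeg.le m) ((natDegree_C_mul_le c Q).trans hQdeg.le) ?_)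
    rw [coeff_weightDerivIter α hPdeg.le, coeff_C_mul, hPn, hQn]
  intro x hx
  rw [iteratedDeriv_one_sub_rpow_mul_eval α P m hx.2, hR, eval_mul, eval_C]
  ring

/-- Lemma (higher derivatives): for the monic Jacobi polynomials on `[0,1]`,
`d^m/dx^m [(1-x)^α P_n^{(α,β)}(x)] = (-1)^m (α+n-m+1)_m (1-x)^{α-m} P_n^{(α-m,β+m)}(x)`
on `(0,1)`, where `(a)_m` is the Pochhammer symbol. -/
theorem stmt_4 (m : ℕ) (hm : 1 ≤ m) (α β : ℝ) (hα : (m : ℝ) - 1 < α) (hβ : -1 < β)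
    (n : ℕ) (P Q : Polynomial ℝ)
    (hPm : P.Monic) (hPdeg : P.natDegree = n)
    (hPorth : ∀ k < n,
      ∫ x in Set.Ioo (0:ℝ) 1, P.eval x * (x ^ β * (1 - x) ^ α) * x ^ k = 0)
    (hQm : Q.Monic) (hQdeg : Q.natDegree = n)
    (hQorth : ∀ k < n,
      ∫ x in Set.Ioo (0:ℝ) 1,
        Q.eval x * (x ^ (β + m) * (1 - x) ^ (α - m)) * x ^ k = 0) :
    ∀ x ∈ Set.Ioo (0:ℝ) 1,
      iteratedDeriv m (fun y => (1 - y) ^ α * P.eval y) x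
        = (-1) ^ m * (∏ i ∈ Finset.range m, (α + n - m + 1 + i))
            * (1 - x) ^ (α - m) * Q.eval x :=
  stmt_4_general m α β hα hβ n P Q hPm hPdeg hPorth hQm hQdeg hQorth
end

section
/- Let α_0 > −1, let c_1, c_2 > 0 with c_1 ≠ c_2, and let n, m be nonnegative integers. Define F : (0,∞) → ℝ by F(x) = x^{−α_0} e^{c_1 x} (d^n/dx^n) [ e^{(c_2−c_1)x} (d^m/dx^m) ( e^{−c_2 x} x^{n+m+α_0} ) ]. Then P(x) = (−1)^{n+m} c_1^{−n} c_2^{−m} F(x) coincides on (0,∞) with a monic polynomial of degree n + m that satisfies ∫_0^∞ P(x) x^{α_0} e^{−c_1 x} x^k dx = 0 for k = 0,…,n−1 and ∫_0^∞ P(x) x^{α_0} e^{−c_2 x} x^k dx = 0 for k = 0,…,m−1. -/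
/-!
Differentiating `e^{-cx} x^β p(x)` gives `e^{-cx} x^{β-1} q(x)` with `q = βp + xp' - cxp`, a polynomial
of one degree more whose leading coefficient is that of `p` times `-c`. Iterating, the Rodrigues
expression equals `x^{α₀} e^{-c₁x} L(x)` for a polynomial `L` of degree `n + m` and leading coefficient
`(-c₁)^n (-c₂)^m`. Orthogonality is repeated integration by parts on `(0, ∞)`, where every boundary
term vanishes because the power of `x` stays positive and the exponentials decay. Against
`x^k e^{-c₁x}` with `k < n`, the `n` outer derivatives kill `x^k`. Against `x^k e^{-c₂x}` with `k < m`,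
the `n` outer derivatives are first moved onto `e^{(c₁-c₂)x} x^k`, which keeps the shape
`e^{(c₁-c₂)x} s(x)` with `deg s ≤ k`, and then the `m` inner derivatives kill `s`.
-/

open MeasureTheory Polynomial Set Filter Topology

section Calculus

variable {𝕜 F : Type*} [NontriviallyNormedField 𝕜] [NormedAddCommGroup F] [NormedSpace 𝕜 F]

theorem iteratedDeriv_eqOn_of_hasDerivAt {s : Set 𝕜} (hs : IsOpen s) {f : ℕ → 𝕜 → F}
    (hf : ∀ k, ∀ x ∈ s, HasDerivAt (f k) (f (k + 1) x) x) (k : ℕ) :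
    EqOn (iteratedDeriv k (f 0)) (f k) s := by
  induction k with
  | zero => exact fun _ _ ↦ rfl
  | succ k ih =>
    intro x hx
    rw [iteratedDeriv_succ, (eventuallyEq_of_mem (hs.mem_nhds hx) ih).deriv_eq]
    exact (hf k x hx).deriv

end Calculus

namespace MultipleLaguerre

noncomputable def rodriguesStep (c β : ℝ) (p : ℝ[X]) : ℝ[X] :=
  C β * p + X * derivative p - C c * (X * p)

noncomputable def rodriguesPoly (c β : ℝ) : ℕ → ℝ[X] → ℝ[X]
  | 0, p => p
  | k + 1, p => rodriguesStep c (β - k) (rodriguesPoly c β k p)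

noncomputable def twistedDerivative (a : ℝ) (s : ℝ[X]) : ℝ[X] :=
  C a * s + derivative s

noncomputable def weightedEval (c β : ℝ) (p : ℝ[X]) (x : ℝ) : ℝ :=
  Real.exp (-c * x) * x ^ β * p.eval x

section Degree

variable {c : ℝ}

theorem coeff_rodriguesStep_natDegree_succ (β : ℝ) (p : ℝ[X]) :
    (rodriguesStep c β p).coeff (p.natDegree + 1) = -c * p.leadingCoeff := by
  simp only [rodriguesStep, coeff_sub, coeff_add, coeff_C_mul, coeff_X_mul, coeff_derivative,
    coeff_eq_zero_of_natDegree_lt (Nat.lt_succ_self p.natDegree), leadingCoeff]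
  ring

theorem natDegree_rodriguesStep_le (β : ℝ) (p : ℝ[X]) :
    (rodriguesStep c β p).natDegree ≤ p.natDegree + 1 := by
  unfold rodriguesStep
  compute_degree
  omega

theorem natDegree_rodriguesStep (hc : c ≠ 0) (β : ℝ) {p : ℝ[X]} (hp : p ≠ 0) :
    (rodriguesStep c β p).natDegree = p.natDegree + 1 :=
  (natDegree_rodriguesStep_le β p).antisymm <| le_natDegree_of_ne_zero <| by
    rw [coeff_rodriguesStep_natDegree_succ]
    exact mul_ne_zero (neg_ne_zero.mpr hc) (leadingCoeff_ne_zero.mpr hp)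

theorem leadingCoeff_rodriguesStep (hc : c ≠ 0) (β : ℝ) (p : ℝ[X]) :
    (rodriguesStep c β p).leadingCoeff = -c * p.leadingCoeff := by
  rcases eq_or_ne p 0 with rfl | hp
  · simp [rodriguesStep]
  rw [leadingCoeff, natDegree_rodriguesStep hc β hp, coeff_rodriguesStep_natDegree_succ]

theorem leadingCoeff_rodriguesPoly (hc : c ≠ 0) (β : ℝ) (p : ℝ[X]) (k : ℕ) :
    (rodriguesPoly c β k p).leadingCoeff = (-c) ^ k * p.leadingCoeff := by
  induction k with
  | zero => simp [rodriguesPoly]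
  | succ k ih => rw [rodriguesPoly, leadingCoeff_rodriguesStep hc, ih, pow_succ]; ring

theorem rodriguesPoly_ne_zero (hc : c ≠ 0) (β : ℝ) {p : ℝ[X]} (hp : p ≠ 0) (k : ℕ) :
    rodriguesPoly c β k p ≠ 0 := by
  rw [← leadingCoeff_ne_zero, leadingCoeff_rodriguesPoly hc]
  exact mul_ne_zero (pow_ne_zero _ (neg_ne_zero.mpr hc)) (leadingCoeff_ne_zero.mpr hp)

theorem natDegree_rodriguesPoly (hc : c ≠ 0) (β : ℝ) {p : ℝ[X]} (hp : p ≠ 0) (k : ℕ) :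
    (rodriguesPoly c β k p).natDegree = p.natDegree + k := by
  induction k with
  | zero => rfl
  | succ k ih =>
    rw [rodriguesPoly, natDegree_rodriguesStep hc _ (rodriguesPoly_ne_zero hc β hp k), ih,
      add_assoc]

theorem natDegree_twistedDerivative_le (a : ℝ) (s : ℝ[X]) :
    (twistedDerivative a s).natDegree ≤ s.natDegree := by
  unfold twistedDerivative
  compute_degree

theorem natDegree_iterate_twistedDerivative_le (a : ℝ) (j : ℕ) (s : ℝ[X]) :
    ((twistedDerivative a)^[j] s).natDegree ≤ s.natDegree := by
  induction j with
  | zero => rfl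
  | succ j ih =>
    rw [Function.iterate_succ_apply']
    exact (natDegree_twistedDerivative_le a _).trans ih

theorem twistedDerivative_zero : twistedDerivative 0 = derivative := by
  ext1 s
  simp [twistedDerivative]

end Degree

theorem hasDerivAt_weightedEval (c β : ℝ) (p : ℝ[X]) {x : ℝ} (hx : 0 < x) :
    HasDerivAt (weightedEval c β p) (weightedEval c (β - 1) (rodriguesStep c β p) x) x := by
  have hexp : HasDerivAt (fun y ↦ Real.exp (-c * y)) (-c * Real.exp (-c * x)) x := by
    simpa [mul_comm] using ((hasDerivAt_id x).const_mul (-c)).exp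
  have hpow : HasDerivAt (fun y ↦ y ^ β) (β * x ^ (β - 1)) x :=
    Real.hasDerivAt_rpow_const (Or.inl hx.ne')
  have hxβ : x ^ β = x ^ (β - 1) * x := by
    rw [← Real.rpow_add_one hx.ne', sub_add_cancel]
  refine ((hexp.mul hpow).mul (p.hasDerivAt x)).congr_deriv ?_
  simp only [weightedEval, rodriguesStep, eval_add, eval_sub, eval_mul, eval_C, eval_X,
    Pi.mul_apply, hxβ]
  ring

theorem iteratedDeriv_weightedEval (c β : ℝ) (p : ℝ[X]) (k : ℕ) :
    EqOn (iteratedDeriv k (weightedEval c β p))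
      (weightedEval c (β - k) (rodriguesPoly c β k p)) (Ioi 0) := by
  have hstep (k : ℕ) (x : ℝ) (hx : x ∈ Ioi (0 : ℝ)) :
      HasDerivAt (weightedEval c (β - k) (rodriguesPoly c β k p))
        (weightedEval c (β - ↑(k + 1)) (rodriguesPoly c β (k + 1) p) x) x := by
    rw [Nat.cast_succ, ← sub_sub]
    exact hasDerivAt_weightedEval c _ _ hx
  simpa [rodriguesPoly] using iteratedDeriv_eqOn_of_hasDerivAt isOpen_Ioi hstep k

theorem hasDerivAt_exp_mul_eval (a : ℝ) (s : ℝ[X]) (x : ℝ) :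
    HasDerivAt (fun y ↦ Real.exp (a * y) * s.eval y)
      (Real.exp (a * x) * (twistedDerivative a s).eval x) x := by
  have hexp : HasDerivAt (fun y ↦ Real.exp (a * y)) (a * Real.exp (a * x)) x := by
    simpa [mul_comm] using ((hasDerivAt_id x).const_mul a).exp
  refine (hexp.mul (s.hasDerivAt x)).congr_deriv ?_
  simp only [twistedDerivative, eval_add, eval_mul, eval_C]
  ring

theorem exp_mul_weightedEval (a c β : ℝ) (p : ℝ[X]) (x : ℝ) :
    Real.exp (a * x) * weightedEval c β p x = weightedEval (c - a) β p x := by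
  rw [weightedEval, weightedEval, show -(c - a) * x = a * x + -c * x by ring, Real.exp_add]
  ring

theorem exp_mul_eval_mul_weightedEval (a c β : ℝ) (s p : ℝ[X]) (x : ℝ) :
    Real.exp (a * x) * s.eval x * weightedEval c β p x = weightedEval (c - a) β (s * p) x := by
  rw [← exp_mul_weightedEval, weightedEval, weightedEval, eval_mul]
  ring

theorem weightedEval_eq_sum (c β : ℝ) (p : ℝ[X]) {x : ℝ} (hx : 0 < x) :
    weightedEval c β p x =
      ∑ i ∈ Finset.range (p.natDegree + 1), p.coeff i * (x ^ (β + i) * Real.exp (-c * x)) := by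
  simp only [weightedEval, eval_eq_sum_range, Finset.mul_sum, Real.rpow_add hx,
    Real.rpow_natCast]
  exact Finset.sum_congr rfl fun i _ ↦ by ring

theorem integrableOn_weightedEval {c β : ℝ} (hc : 0 < c) (hβ : -1 < β) (p : ℝ[X]) :
    IntegrableOn (weightedEval c β p) (Ioi 0) := by
  refine IntegrableOn.congr_fun ?_ (fun x hx ↦ (weightedEval_eq_sum c β p hx).symm)
    measurableSet_Ioi
  refine integrable_finsetSum _ fun i _ ↦ Integrable.const_mul ?_ _
  have hi : -1 < β + i := by linarith [(Nat.cast_nonneg i : (0 : ℝ) ≤ i)]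
  simpa [IntegrableOn] using integrableOn_rpow_mul_exp_neg_mul_rpow (p := 1) hi one_pos hc

theorem tendsto_weightedEval_atTop {c : ℝ} (hc : 0 < c) (β : ℝ) (p : ℝ[X]) :
    Tendsto (weightedEval c β p) atTop (𝓝 0) := by
  have hsum := tendsto_finsetSum (Finset.range (p.natDegree + 1)) fun i _ ↦
    (tendsto_rpow_mul_exp_neg_mul_atTop_nhds_zero (β + i) c hc).const_mul (p.coeff i)
  simp only [mul_zero, Finset.sum_const_zero] at hsum
  refine hsum.congr' ?_
  filter_upwards [eventually_gt_atTop 0] with x hx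
  exact (weightedEval_eq_sum c β p hx).symm

theorem tendsto_weightedEval_nhdsGT_zero (c : ℝ) {β : ℝ} (hβ : 0 < β) (p : ℝ[X]) :
    Tendsto (weightedEval c β p) (𝓝[>] 0) (𝓝 0) := by
  have hcont : ContinuousAt (weightedEval c β p) 0 := by
    unfold weightedEval
    exact (by fun_prop : ContinuousAt (fun x : ℝ ↦ Real.exp (-c * x)) 0).mul
      (Real.continuousAt_rpow_const 0 β (Or.inr hβ.le)) |>.mul (by fun_prop)
  simpa [weightedEval, Real.zero_rpow hβ.ne'] using hcont.tendsto.mono_left nhdsWithin_le_nhds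

theorem integral_exp_mul_weightedEval_rodriguesStep {a c γ : ℝ} (hac : a < c) (hγ : 0 < γ)
    (p s : ℝ[X]) :
    ∫ x in Ioi 0, Real.exp (a * x) * s.eval x * weightedEval c (γ - 1) (rodriguesStep c γ p) x =
      -∫ x in Ioi 0, Real.exp (a * x) * (twistedDerivative a s).eval x * weightedEval c γ p x := by
  have hca : 0 < c - a := sub_pos.mpr hac
  have hibp := integral_Ioi_mul_deriv_eq_deriv_mul
    (u := fun y ↦ Real.exp (a * y) * s.eval y) (v := weightedEval c γ p) (a' := 0) (b' := 0)
    (fun x _ ↦ hasDerivAt_exp_mul_eval a s x) (fun x hx ↦ hasDerivAt_weightedEval c γ p hx)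
    ?_ ?_ ?_ ?_
  · simpa using hibp
  all_goals simp only [Pi.mul_def, exp_mul_eval_mul_weightedEval]
  · exact integrableOn_weightedEval hca (by linarith) _
  · exact integrableOn_weightedEval hca (by linarith) _
  · exact tendsto_weightedEval_nhdsGT_zero _ hγ _
  · exact tendsto_weightedEval_atTop hca _ _

theorem integral_exp_mul_weightedEval_rodriguesPoly {a c β : ℝ} (hac : a < c) (p : ℝ[X])
    (J j : ℕ) (hβ : -1 < β - ↑(J + j)) (s : ℝ[X]) :
    ∫ x in Ioi 0, Real.exp (a * x) * s.eval x *
        weightedEval c (β - ↑(J + j)) (rodriguesPoly c β (J + j) p) x =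
      (-1) ^ j * ∫ x in Ioi 0, Real.exp (a * x) * ((twistedDerivative a)^[j] s).eval x *
        weightedEval c (β - J) (rodriguesPoly c β J p) x := by
  induction j generalizing s with
  | zero => simp
  | succ j ih =>
    have hγ : 0 < β - ↑(J + j) := by push_cast at hβ ⊢; linarith
    have hunfold : weightedEval c (β - ↑(J + (j + 1))) (rodriguesPoly c β (J + (j + 1)) p) =
        weightedEval c (β - ↑(J + j) - 1) (rodriguesStep c (β - ↑(J + j))
          (rodriguesPoly c β (J + j) p)) := by
      rw [← add_assoc, rodriguesPoly]
      push_cast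
      ring_nf
    rw [hunfold, integral_exp_mul_weightedEval_rodriguesStep hac hγ, ih (by linarith),
      Function.iterate_succ_apply, pow_succ]
    ring

theorem integral_eval_mul_weightedEval_rodriguesPoly_eq_zero {c β : ℝ} (hc : 0 < c) (p : ℝ[X])
    {N : ℕ} (hβ : -1 < β - N) {s : ℝ[X]} (hs : s.natDegree < N) :
    ∫ x in Ioi 0, s.eval x * weightedEval c (β - N) (rodriguesPoly c β N p) x = 0 := by
  obtain ⟨J, rfl⟩ : ∃ J, N = J + (s.natDegree + 1) := ⟨N - (s.natDegree + 1), by omega⟩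
  have hchain := integral_exp_mul_weightedEval_rodriguesPoly hc p J (s.natDegree + 1) hβ s
  rw [twistedDerivative_zero, iterate_derivative_eq_zero (Nat.lt_succ_self _)] at hchain
  simpa using hchain

noncomputable def laguerreRodrigues (c₁ c₂ α : ℝ) (n m : ℕ) : ℝ[X] :=
  rodriguesPoly c₁ (n + α) n (rodriguesPoly c₂ (n + m + α) m 1)

section LaguerreRodrigues

variable {c₁ c₂ : ℝ} (α : ℝ) (n m : ℕ)

theorem natDegree_laguerreRodrigues (hc₁ : c₁ ≠ 0) (hc₂ : c₂ ≠ 0) :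
    (laguerreRodrigues c₁ c₂ α n m).natDegree = n + m := by
  rw [laguerreRodrigues, natDegree_rodriguesPoly hc₁ _ (rodriguesPoly_ne_zero hc₂ _ one_ne_zero m),
    natDegree_rodriguesPoly hc₂ _ one_ne_zero, natDegree_one]
  ring

theorem leadingCoeff_laguerreRodrigues (hc₁ : c₁ ≠ 0) (hc₂ : c₂ ≠ 0) :
    (laguerreRodrigues c₁ c₂ α n m).leadingCoeff = (-c₁) ^ n * (-c₂) ^ m := by
  rw [laguerreRodrigues, leadingCoeff_rodriguesPoly hc₁, leadingCoeff_rodriguesPoly hc₂,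
    leadingCoeff_one, mul_one]

theorem eval_laguerreRodrigues {x : ℝ} (hx : 0 < x) :
    x ^ (-α) * Real.exp (c₁ * x) *
        iteratedDeriv n (fun y ↦ Real.exp ((c₂ - c₁) * y) *
          iteratedDeriv m (fun z ↦ Real.exp (-c₂ * z) * z ^ ((n : ℝ) + m + α)) y) x =
      (laguerreRodrigues c₁ c₂ α n m).eval x := by
  have hweight : (fun z ↦ Real.exp (-c₂ * z) * z ^ ((n : ℝ) + m + α)) =
      weightedEval c₂ (n + m + α) 1 := by
    funext z
    simp [weightedEval]
  have hinner : EqOn (fun y ↦ Real.exp ((c₂ - c₁) * y) *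
        iteratedDeriv m (fun z ↦ Real.exp (-c₂ * z) * z ^ ((n : ℝ) + m + α)) y)
      (weightedEval c₁ (n + α) (rodriguesPoly c₂ (n + m + α) m 1)) (Ioi 0) := fun y hy ↦ by
    dsimp only
    rw [hweight, iteratedDeriv_weightedEval _ _ _ _ hy, exp_mul_weightedEval, sub_sub_cancel,
      show (n : ℝ) + m + α - m = n + α by ring]
  rw [hinner.iteratedDeriv_of_isOpen isOpen_Ioi n hx, iteratedDeriv_weightedEval _ _ _ _ hx,
    weightedEval, add_sub_cancel_left, ← laguerreRodrigues]
  set L := laguerreRodrigues c₁ c₂ α n m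
  calc x ^ (-α) * Real.exp (c₁ * x) * (Real.exp (-c₁ * x) * x ^ α * L.eval x)
      = x ^ (-α + α) * Real.exp (c₁ * x + -c₁ * x) * L.eval x := by
        rw [Real.rpow_add hx, Real.exp_add]
        ring
    _ = L.eval x := by simp

theorem integral_laguerreRodrigues_mul_eq_zero_left (hα : -1 < α) (hc₁ : 0 < c₁) {s : ℝ[X]}
    (hs : s.natDegree < n) :
    ∫ x in Ioi 0, (laguerreRodrigues c₁ c₂ α n m).eval x * (x ^ α * Real.exp (-c₁ * x)) *
      s.eval x = 0 := by
  have hβ : -1 < (n + α) - n := by rwa [add_sub_cancel_left]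
  convert integral_eval_mul_weightedEval_rodriguesPoly_eq_zero hc₁
    (rodriguesPoly c₂ (n + m + α) m 1) hβ hs using 3 with x
  rw [weightedEval, add_sub_cancel_left, laguerreRodrigues]
  ring

theorem integral_laguerreRodrigues_mul_eq_zero_right (hα : -1 < α) (hc₂ : 0 < c₂)
    {s : ℝ[X]} (hs : s.natDegree < m) :
    ∫ x in Ioi 0, (laguerreRodrigues c₁ c₂ α n m).eval x * (x ^ α * Real.exp (-c₂ * x)) *
      s.eval x = 0 := by
  have hβ : -1 < (n + m + α) - m := by rw [add_right_comm, add_sub_cancel_right]; linarith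
  have hchain := integral_exp_mul_weightedEval_rodriguesPoly (β := n + α) (sub_lt_self c₁ hc₂)
    (rodriguesPoly c₂ (n + m + α) m 1) 0 n (by simpa using hα) s
  have hzero := integral_eval_mul_weightedEval_rodriguesPoly_eq_zero hc₂ 1 hβ
    ((natDegree_iterate_twistedDerivative_le (c₁ - c₂) n s).trans_lt hs)
  simp only [zero_add, Nat.cast_zero, sub_zero, rodriguesPoly] at hchain
  have hexp (t : ℝ[X]) (p : ℝ[X]) (β x : ℝ) :
      Real.exp ((c₁ - c₂) * x) * t.eval x * weightedEval c₁ β p x =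
        t.eval x * weightedEval c₂ β p x := by
    rw [mul_comm (Real.exp _), mul_assoc, exp_mul_weightedEval, sub_sub_cancel]
  calc _ = ∫ x in Ioi 0, Real.exp ((c₁ - c₂) * x) * s.eval x *
        weightedEval c₁ (n + α - n) (laguerreRodrigues c₁ c₂ α n m) x := by
        congr 1 with x
        rw [hexp, weightedEval, add_sub_cancel_left]
        ring
    _ = 0 := by
        rw [laguerreRodrigues, hchain]
        simp only [hexp]
        rw [show (n : ℝ) + α = n + m + α - m by ring, hzero, mul_zero]

end LaguerreRodrigues

end MultipleLaguerre

open MultipleLaguerre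

theorem stmt_11_general (α₀ : ℝ) (h0 : -1 < α₀) (c₁ c₂ : ℝ) (hc1 : 0 < c₁) (hc2 : 0 < c₂)
    (n m : ℕ) (F : ℝ → ℝ)
    (hF : ∀ x ∈ Set.Ioi (0:ℝ),
      F x = x ^ (-α₀) * Real.exp (c₁ * x) *
        iteratedDeriv n (fun y => Real.exp ((c₂ - c₁) * y) *
          iteratedDeriv m (fun z => Real.exp (-c₂ * z) * z ^ ((n : ℝ) + m + α₀)) y) x) :
    ∃ P : Polynomial ℝ, P.Monic ∧ P.natDegree = n + m ∧
      (∀ x ∈ Set.Ioi (0:ℝ),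
        (-1) ^ (n + m) * c₁ ^ (-(n : ℤ)) * c₂ ^ (-(m : ℤ)) * F x = P.eval x) ∧
      (∀ k < n,
        ∫ x in Set.Ioi (0:ℝ), P.eval x * (x ^ α₀ * Real.exp (-c₁ * x)) * x ^ k = 0) ∧
      (∀ k < m,
        ∫ x in Set.Ioi (0:ℝ), P.eval x * (x ^ α₀ * Real.exp (-c₂ * x)) * x ^ k = 0) := by
  set L := laguerreRodrigues c₁ c₂ α₀ n m
  have hlead : L.leadingCoeff = (-c₁) ^ n * (-c₂) ^ m :=
    leadingCoeff_laguerreRodrigues _ _ _ hc1.ne' hc2.ne'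
  have hL0 : L.leadingCoeff ≠ 0 := by simp [hlead, hc1.ne', hc2.ne']
  have hscale : (-1) ^ (n + m) * c₁ ^ (-(n : ℤ)) * c₂ ^ (-(m : ℤ)) = L.leadingCoeff⁻¹ := by
    simp only [hlead, zpow_neg, zpow_natCast, neg_pow c₁, neg_pow c₂, pow_add, mul_inv, ← inv_pow,
      inv_neg_one]
    ring
  have horth (c : ℝ) (k : ℕ)
      (h : ∫ x in Ioi 0, L.eval x * (x ^ α₀ * Real.exp (-c * x)) * (X ^ k : ℝ[X]).eval x = 0) :
      ∫ x in Ioi 0, (C L.leadingCoeff⁻¹ * L).eval x * (x ^ α₀ * Real.exp (-c * x)) * x ^ k = 0 := by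
    simp only [eval_pow, eval_X] at h
    calc _ = L.leadingCoeff⁻¹ * ∫ x in Ioi 0, L.eval x * (x ^ α₀ * Real.exp (-c * x)) * x ^ k := by
          rw [← integral_const_mul]
          congr 1 with x
          rw [eval_mul, eval_C]
          ring
      _ = 0 := by rw [h, mul_zero]
  refine ⟨C L.leadingCoeff⁻¹ * L, monic_C_mul_of_mul_leadingCoeff_eq_one (inv_mul_cancel₀ hL0),
    ?_, fun x hx ↦ ?_, fun k hk ↦ horth c₁ k ?_, fun k hk ↦ horth c₂ k ?_⟩
  · rw [natDegree_C_mul (inv_ne_zero hL0), natDegree_laguerreRodrigues _ _ _ hc1.ne' hc2.ne']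
  · rw [hF x hx, eval_laguerreRodrigues _ _ _ hx, hscale, eval_mul, eval_C]
  · exact integral_laguerreRodrigues_mul_eq_zero_left _ _ _ h0 hc1 (by simpa using hk)
  · exact integral_laguerreRodrigues_mul_eq_zero_right _ _ _ h0 hc2 (by simpa using hk)

/-- **Rodrigues formula for multiple Laguerre polynomials of the second kind** (r = 2):
`(-1)^{n+m} c₁^{-n} c₂^{-m} x^{-α₀} e^{c₁x} D^n [e^{(c₂-c₁)x} D^m (e^{-c₂x} x^{n+m+α₀})]`
coincides on `(0,∞)` with the monic multiple Laguerre polynomial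
`L_{n,m}^{(α₀,c₁,c₂)}` of degree `n+m`. -/
theorem stmt_11 (α₀ : ℝ) (h0 : -1 < α₀) (c₁ c₂ : ℝ) (hc1 : 0 < c₁) (hc2 : 0 < c₂)
    (hc : c₁ ≠ c₂) (n m : ℕ) (F : ℝ → ℝ)
    (hF : ∀ x ∈ Set.Ioi (0:ℝ),
      F x = x ^ (-α₀) * Real.exp (c₁ * x) *
        iteratedDeriv n (fun y => Real.exp ((c₂ - c₁) * y) *
          iteratedDeriv m (fun z => Real.exp (-c₂ * z) * z ^ ((n : ℝ) + m + α₀)) y) x) :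
    ∃ P : Polynomial ℝ, P.Monic ∧ P.natDegree = n + m ∧
      (∀ x ∈ Set.Ioi (0:ℝ),
        (-1) ^ (n + m) * c₁ ^ (-(n : ℤ)) * c₂ ^ (-(m : ℤ)) * F x = P.eval x) ∧
      (∀ k < n,
        ∫ x in Set.Ioi (0:ℝ), P.eval x * (x ^ α₀ * Real.exp (-c₁ * x)) * x ^ k = 0) ∧
      (∀ k < m,
        ∫ x in Set.Ioi (0:ℝ), P.eval x * (x ^ α₀ * Real.exp (-c₂ * x)) * x ^ k = 0) :=
  stmt_11_general α₀ h0 c₁ c₂ hc1 hc2 n m F hF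
end
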